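/- On the elliptic curve E over ℚ(t) with Weierstrass equation y^2 = x^3 + ((t^4 - 2t^3 + 3t^2 + 6t + 1)/(t+1)^2) x^2 + (8 t^3 (t^2 - t - 1)/(t+1)^3) x + 16 t^6/(t+1)^4, the point p_t with affine coordinates (0, 4t^3/(t+1)^2) is a torsion point of exact order 7. -/

import Mathlib

open RatFunc

/-- The elliptic curve `E/ℚ(t)` with Weierstrass equation
`y² = x³ + ((t⁴-2t³+3t²+6t+1)/(t+1)²) x² + (8t³(t²-t-1)/(t+1)³) x + 16t⁶/(t+1)⁴`. -/
noncomputable def E7 : WeierstrassCurve.Affine (RatFunc ℚ) where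
  a₁ := 0
  a₂ := (RatFunc.X ^ 4 - 2 * RatFunc.X ^ 3 + 3 * RatFunc.X ^ 2 + 6 * RatFunc.X + 1)
    / (RatFunc.X + 1) ^ 2
  a₃ := 0
  a₄ := 8 * RatFunc.X ^ 3 * (RatFunc.X ^ 2 - RatFunc.X - 1) / (RatFunc.X + 1) ^ 3
  a₆ := 16 * RatFunc.X ^ 6 / (RatFunc.X + 1) ^ 4

namespace E7Aux

open WeierstrassCurve.Affine WeierstrassCurve.Affine.Point

open Classical

lemma ea1 : E7.a₁ = 0 := rfl
lemma ea2 : E7.a₂ = (RatFunc.X ^ 4 - 2 * RatFunc.X ^ 3 + 3 * RatFunc.X ^ 2 + 6 * RatFunc.X + 1)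
    / (RatFunc.X + 1) ^ 2 := rfl
lemma ea3 : E7.a₃ = 0 := rfl
lemma ea4 : E7.a₄ = 8 * RatFunc.X ^ 3 * (RatFunc.X ^ 2 - RatFunc.X - 1) / (RatFunc.X + 1) ^ 3 := rfl
lemma ea6 : E7.a₆ = 16 * RatFunc.X ^ 6 / (RatFunc.X + 1) ^ 4 := rfl

lemma hT : (RatFunc.X : RatFunc ℚ) ≠ 0 := RatFunc.X_ne_zero

lemma hT1 : (RatFunc.X + 1 : RatFunc ℚ) ≠ 0 := by
  have h : (RatFunc.X + 1 : RatFunc ℚ) =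
      algebraMap (Polynomial ℚ) (RatFunc ℚ) (Polynomial.X + 1) := by simp
  rw [h]
  refine RatFunc.algebraMap_ne_zero fun hc => ?_
  have := congrArg (Polynomial.eval 0) hc
  simp at this

lemma htwo : (2 : RatFunc ℚ) ≠ 0 := by
  have h : (2 : RatFunc ℚ) = algebraMap (Polynomial ℚ) (RatFunc ℚ) 2 := (map_ofNat _ 2).symm
  rw [h]; exact RatFunc.algebraMap_ne_zero two_ne_zero

lemma hfour : (4 : RatFunc ℚ) ≠ 0 := by
  have h : (4 : RatFunc ℚ) = 2 * 2 := by norm_num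
  rw [h]; exact mul_ne_zero htwo htwo

lemma ne_negY {x y : RatFunc ℚ} (hy : y ≠ 0) : y ≠ E7.negY x y := by
  rw [WeierstrassCurve.Affine.negY, ea1, ea3]
  intro h
  apply hy
  have h2 : (2 : RatFunc ℚ) * y = 0 := by linear_combination h
  exact (mul_eq_zero.mp h2).resolve_left htwo

lemma hy1 : (4 * RatFunc.X ^ 3 / (RatFunc.X + 1) ^ 2 : RatFunc ℚ) ≠ 0 :=
  div_ne_zero (mul_ne_zero hfour (pow_ne_zero _ hT)) (pow_ne_zero _ hT1)

lemma hy2 : (-4 * RatFunc.X / (RatFunc.X + 1) : RatFunc ℚ) ≠ 0 :=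
  div_ne_zero (mul_ne_zero (neg_ne_zero.mpr hfour) hT) hT1

lemma hy3 : (-4 * RatFunc.X ^ 2 : RatFunc ℚ) ≠ 0 :=
  mul_ne_zero (neg_ne_zero.mpr hfour) (pow_ne_zero _ hT)

lemma hy4 : (4 * RatFunc.X ^ 2 : RatFunc ℚ) ≠ 0 :=
  mul_ne_zero hfour (pow_ne_zero _ hT)

lemma hx3 : (4 * RatFunc.X ^ 2 / (RatFunc.X + 1) : RatFunc ℚ) ≠ 0 :=
  div_ne_zero hy4 hT1

lemma h1 : E7.Nonsingular 0 (4 * RatFunc.X ^ 3 / (RatFunc.X + 1) ^ 2) := by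
  refine (nonsingular_iff _ _).mpr ⟨?_, Or.inr ?_⟩
  · rw [equation_iff, ea1, ea2, ea3, ea4, ea6]
    simp only [div_eq_mul_inv, ← inv_pow]
    generalize hgen : ((RatFunc.X + 1 : RatFunc ℚ))⁻¹ = u
    have hu : (RatFunc.X + 1) * u = 1 := by rw [← hgen]; exact mul_inv_cancel₀ hT1
    linear_combination (0) * hu
  · have := ne_negY (x := 0) hy1
    rwa [WeierstrassCurve.Affine.negY, ea1, ea3] at this

lemma h2 : E7.Nonsingular (-4 * RatFunc.X / (RatFunc.X + 1)) (-4 * RatFunc.X / (RatFunc.X + 1)) := by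
  refine (nonsingular_iff _ _).mpr ⟨?_, Or.inr ?_⟩
  · rw [equation_iff, ea1, ea2, ea3, ea4, ea6]
    simp only [div_eq_mul_inv, ← inv_pow]
    generalize hgen : ((RatFunc.X + 1 : RatFunc ℚ))⁻¹ = u
    have hu : (RatFunc.X + 1) * u = 1 := by rw [← hgen]; exact mul_inv_cancel₀ hT1
    linear_combination (((-16 : RatFunc ℚ) * RatFunc.X ^ 2) * u ^ 2 + ((-16 : RatFunc ℚ) * RatFunc.X ^ 2 + (-80 : RatFunc ℚ) * RatFunc.X ^ 3) * u ^ 3) * hu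
  · have := ne_negY (x := -4 * RatFunc.X / (RatFunc.X + 1)) hy2
    rwa [WeierstrassCurve.Affine.negY, ea1, ea3] at this

lemma h3 : E7.Nonsingular (4 * RatFunc.X ^ 2 / (RatFunc.X + 1)) (-4 * RatFunc.X ^ 2) := by
  refine (nonsingular_iff _ _).mpr ⟨?_, Or.inr ?_⟩
  · rw [equation_iff, ea1, ea2, ea3, ea4, ea6]
    simp only [div_eq_mul_inv, ← inv_pow]
    generalize hgen : ((RatFunc.X + 1 : RatFunc ℚ))⁻¹ = u
    have hu : (RatFunc.X + 1) * u = 1 := by rw [← hgen]; exact mul_inv_cancel₀ hT1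
    linear_combination (((-16 : RatFunc ℚ) * RatFunc.X ^ 4) + ((-16 : RatFunc ℚ) * RatFunc.X ^ 4 + (-16 : RatFunc ℚ) * RatFunc.X ^ 5) * u + ((-16 : RatFunc ℚ) * RatFunc.X ^ 4 + (-32 : RatFunc ℚ) * RatFunc.X ^ 5 + (-16 : RatFunc ℚ) * RatFunc.X ^ 6) * u ^ 2 + ((-16 : RatFunc ℚ) * RatFunc.X ^ 4 + (-48 : RatFunc ℚ) * RatFunc.X ^ 5 + (16 : RatFunc ℚ) * RatFunc.X ^ 6 + (-16 : RatFunc ℚ) * RatFunc.X ^ 7) * u ^ 3) * hu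
  · have := ne_negY (x := 4 * RatFunc.X ^ 2 / (RatFunc.X + 1)) hy3
    rwa [WeierstrassCurve.Affine.negY, ea1, ea3] at this

lemma h4 : E7.Nonsingular (4 * RatFunc.X ^ 2 / (RatFunc.X + 1)) (4 * RatFunc.X ^ 2) := by
  refine (nonsingular_iff _ _).mpr ⟨?_, Or.inr ?_⟩
  · rw [equation_iff, ea1, ea2, ea3, ea4, ea6]
    simp only [div_eq_mul_inv, ← inv_pow]
    generalize hgen : ((RatFunc.X + 1 : RatFunc ℚ))⁻¹ = u
    have hu : (RatFunc.X + 1) * u = 1 := by rw [← hgen]; exact mul_inv_cancel₀ hT1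
    linear_combination (((-16 : RatFunc ℚ) * RatFunc.X ^ 4) + ((-16 : RatFunc ℚ) * RatFunc.X ^ 4 + (-16 : RatFunc ℚ) * RatFunc.X ^ 5) * u + ((-16 : RatFunc ℚ) * RatFunc.X ^ 4 + (-32 : RatFunc ℚ) * RatFunc.X ^ 5 + (-16 : RatFunc ℚ) * RatFunc.X ^ 6) * u ^ 2 + ((-16 : RatFunc ℚ) * RatFunc.X ^ 4 + (-48 : RatFunc ℚ) * RatFunc.X ^ 5 + (16 : RatFunc ℚ) * RatFunc.X ^ 6 + (-16 : RatFunc ℚ) * RatFunc.X ^ 7) * u ^ 3) * hu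
  · have := ne_negY (x := 4 * RatFunc.X ^ 2 / (RatFunc.X + 1)) hy4
    rwa [WeierstrassCurve.Affine.negY, ea1, ea3] at this

lemma hL1 : E7.slope 0 0 (4 * RatFunc.X ^ 3 / (RatFunc.X + 1) ^ 2) (4 * RatFunc.X ^ 3 / (RatFunc.X + 1) ^ 2) = (RatFunc.X ^ 2 - RatFunc.X - 1) / (RatFunc.X + 1) := by
  rw [slope_of_Y_ne rfl (ne_negY hy1),
    div_eq_div_iff (sub_ne_zero.mpr (ne_negY hy1)) hT1]
  simp only [WeierstrassCurve.Affine.negY, ea1, ea2, ea3, ea4]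
  simp only [div_eq_mul_inv, ← inv_pow]
  generalize hgen : ((RatFunc.X + 1 : RatFunc ℚ))⁻¹ = u
  have hu : (RatFunc.X + 1) * u = 1 := by rw [← hgen]; exact mul_inv_cancel₀ hT1
  linear_combination (((-8 : RatFunc ℚ) * RatFunc.X ^ 3 + (-8 : RatFunc ℚ) * RatFunc.X ^ 4 + (8 : RatFunc ℚ) * RatFunc.X ^ 5) * u ^ 2) * hu

lemma hL2 : E7.slope (-4 * RatFunc.X / (RatFunc.X + 1)) 0 (-4 * RatFunc.X / (RatFunc.X + 1)) (4 * RatFunc.X ^ 3 / (RatFunc.X + 1) ^ 2) = (RatFunc.X ^ 2 + RatFunc.X + 1) / (RatFunc.X + 1) := by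
  rw [slope_of_X_ne hy2, div_eq_div_iff (sub_ne_zero.mpr hy2) hT1]
  simp only [div_eq_mul_inv, ← inv_pow]
  generalize hgen : ((RatFunc.X + 1 : RatFunc ℚ))⁻¹ = u
  have hu : (RatFunc.X + 1) * u = 1 := by rw [← hgen]; exact mul_inv_cancel₀ hT1
  linear_combination (((-4 : RatFunc ℚ) * RatFunc.X ^ 3) * u) * hu

lemma hL3 : E7.slope (4 * RatFunc.X ^ 2 / (RatFunc.X + 1)) 0 (-4 * RatFunc.X ^ 2) (4 * RatFunc.X ^ 3 / (RatFunc.X + 1) ^ 2) = (-RatFunc.X ^ 2 - 3 * RatFunc.X - 1) / (RatFunc.X + 1) := by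
  rw [slope_of_X_ne hx3, div_eq_div_iff (sub_ne_zero.mpr hx3) hT1]
  simp only [div_eq_mul_inv, ← inv_pow]
  generalize hgen : ((RatFunc.X + 1 : RatFunc ℚ))⁻¹ = u
  have hu : (RatFunc.X + 1) * u = 1 := by rw [← hgen]; exact mul_inv_cancel₀ hT1
  linear_combination (((4 : RatFunc ℚ) * RatFunc.X ^ 2 + (4 : RatFunc ℚ) * RatFunc.X ^ 3) + ((-4 : RatFunc ℚ) * RatFunc.X ^ 3) * u) * hu

lemma hex1 : E7.addX 0 0 ((RatFunc.X ^ 2 - RatFunc.X - 1) / (RatFunc.X + 1)) = -4 * RatFunc.X / (RatFunc.X + 1) := by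
  simp only [WeierstrassCurve.Affine.addX, ea1, ea2]
  simp only [div_eq_mul_inv, ← inv_pow]
  generalize hgen : ((RatFunc.X + 1 : RatFunc ℚ))⁻¹ = u
  have hu : (RatFunc.X + 1) * u = 1 := by rw [← hgen]; exact mul_inv_cancel₀ hT1
  linear_combination (((-4 : RatFunc ℚ) * RatFunc.X) * u) * hu

lemma hey1 : E7.addY 0 0 (4 * RatFunc.X ^ 3 / (RatFunc.X + 1) ^ 2) ((RatFunc.X ^ 2 - RatFunc.X - 1) / (RatFunc.X + 1)) = -4 * RatFunc.X / (RatFunc.X + 1) := by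
  simp only [WeierstrassCurve.Affine.addY, WeierstrassCurve.Affine.negAddY,
    WeierstrassCurve.Affine.addX, WeierstrassCurve.Affine.negY, ea1, ea2, ea3]
  simp only [div_eq_mul_inv, ← inv_pow]
  generalize hgen : ((RatFunc.X + 1 : RatFunc ℚ))⁻¹ = u
  have hu : (RatFunc.X + 1) * u = 1 := by rw [← hgen]; exact mul_inv_cancel₀ hT1
  linear_combination (((-4 : RatFunc ℚ) * RatFunc.X) * u + ((-4 : RatFunc ℚ) * RatFunc.X + (-4 : RatFunc ℚ) * RatFunc.X ^ 2 + (4 : RatFunc ℚ) * RatFunc.X ^ 3) * u ^ 2) * hu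

lemma hex2 : E7.addX (-4 * RatFunc.X / (RatFunc.X + 1)) 0 ((RatFunc.X ^ 2 + RatFunc.X + 1) / (RatFunc.X + 1)) = 4 * RatFunc.X ^ 2 / (RatFunc.X + 1) := by
  simp only [WeierstrassCurve.Affine.addX, ea1, ea2]
  simp only [div_eq_mul_inv, ← inv_pow]
  generalize hgen : ((RatFunc.X + 1 : RatFunc ℚ))⁻¹ = u
  have hu : (RatFunc.X + 1) * u = 1 := by rw [← hgen]; exact mul_inv_cancel₀ hT1
  linear_combination (((-4 : RatFunc ℚ) * RatFunc.X + (4 : RatFunc ℚ) * RatFunc.X ^ 2) * u) * hu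

lemma hey2 : E7.addY (-4 * RatFunc.X / (RatFunc.X + 1)) 0 (-4 * RatFunc.X / (RatFunc.X + 1)) ((RatFunc.X ^ 2 + RatFunc.X + 1) / (RatFunc.X + 1)) = -4 * RatFunc.X ^ 2 := by
  simp only [WeierstrassCurve.Affine.addY, WeierstrassCurve.Affine.negAddY,
    WeierstrassCurve.Affine.addX, WeierstrassCurve.Affine.negY, ea1, ea2, ea3]
  simp only [div_eq_mul_inv, ← inv_pow]
  generalize hgen : ((RatFunc.X + 1 : RatFunc ℚ))⁻¹ = u
  have hu : (RatFunc.X + 1) * u = 1 := by rw [← hgen]; exact mul_inv_cancel₀ hT1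
  linear_combination (((-4 : RatFunc ℚ) * RatFunc.X ^ 2) + ((-4 : RatFunc ℚ) * RatFunc.X + (-4 : RatFunc ℚ) * RatFunc.X ^ 2 + (-4 : RatFunc ℚ) * RatFunc.X ^ 3) * u + ((4 : RatFunc ℚ) * RatFunc.X + (-4 : RatFunc ℚ) * RatFunc.X ^ 4) * u ^ 2) * hu

lemma hex3 : E7.addX (4 * RatFunc.X ^ 2 / (RatFunc.X + 1)) 0 ((-RatFunc.X ^ 2 - 3 * RatFunc.X - 1) / (RatFunc.X + 1)) = 4 * RatFunc.X ^ 2 / (RatFunc.X + 1) := by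
  simp only [WeierstrassCurve.Affine.addX, ea1, ea2]
  simp only [div_eq_mul_inv, ← inv_pow]
  generalize hgen : ((RatFunc.X + 1 : RatFunc ℚ))⁻¹ = u
  have hu : (RatFunc.X + 1) * u = 1 := by rw [← hgen]; exact mul_inv_cancel₀ hT1
  linear_combination (((8 : RatFunc ℚ) * RatFunc.X ^ 2) * u) * hu

lemma hey3 : E7.addY (4 * RatFunc.X ^ 2 / (RatFunc.X + 1)) 0 (-4 * RatFunc.X ^ 2) ((-RatFunc.X ^ 2 - 3 * RatFunc.X - 1) / (RatFunc.X + 1)) = 4 * RatFunc.X ^ 2 := by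
  simp only [WeierstrassCurve.Affine.addY, WeierstrassCurve.Affine.negAddY,
    WeierstrassCurve.Affine.addX, WeierstrassCurve.Affine.negY, ea1, ea2, ea3]
  simp only [div_eq_mul_inv, ← inv_pow]
  generalize hgen : ((RatFunc.X + 1 : RatFunc ℚ))⁻¹ = u
  have hu : (RatFunc.X + 1) * u = 1 := by rw [← hgen]; exact mul_inv_cancel₀ hT1
  linear_combination (((8 : RatFunc ℚ) * RatFunc.X ^ 2 + (24 : RatFunc ℚ) * RatFunc.X ^ 3 + (8 : RatFunc ℚ) * RatFunc.X ^ 4) * u ^ 2) * hu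

lemma add_eq {F : Type*} [Field F] {W : WeierstrassCurve.Affine F}
    {x₁ y₁ x₂ y₂ x₃ y₃ : F} {h₁ : W.Nonsingular x₁ y₁} {h₂ : W.Nonsingular x₂ y₂}
    (h₃ : W.Nonsingular x₃ y₃) (hx : x₁ ≠ x₂)
    (ex : W.addX x₁ x₂ (W.slope x₁ x₂ y₁ y₂) = x₃)
    (ey : W.addY x₁ x₂ y₁ (W.slope x₁ x₂ y₁ y₂) = y₃) :
    WeierstrassCurve.Affine.Point.some _ _ h₁ + WeierstrassCurve.Affine.Point.some _ _ h₂ = WeierstrassCurve.Affine.Point.some _ _ h₃ := by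
  subst ex ey
  exact add_of_X_ne hx

lemma dbl_eq {F : Type*} [Field F] {W : WeierstrassCurve.Affine F}
    {x₁ y₁ x₃ y₃ : F} {h₁ : W.Nonsingular x₁ y₁}
    (h₃ : W.Nonsingular x₃ y₃) (hy : y₁ ≠ W.negY x₁ y₁)
    (ex : W.addX x₁ x₁ (W.slope x₁ x₁ y₁ y₁) = x₃)
    (ey : W.addY x₁ x₁ y₁ (W.slope x₁ x₁ y₁ y₁) = y₃) :
    WeierstrassCurve.Affine.Point.some _ _ h₁ + WeierstrassCurve.Affine.Point.some _ _ h₁ = WeierstrassCurve.Affine.Point.some _ _ h₃ := by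
  subst ex ey
  exact add_self_of_Y_ne hy

lemma some_congr {F : Type*} [Field F] {W : WeierstrassCurve.Affine F}
    {x₁ y₁ x₂ y₂ : F} {h₁ : W.Nonsingular x₁ y₁} {h₂ : W.Nonsingular x₂ y₂}
    (hx : x₁ = x₂) (hy : y₁ = y₂) : WeierstrassCurve.Affine.Point.some _ _ h₁ = WeierstrassCurve.Affine.Point.some _ _ h₂ := by
  subst hx hy; rfl

end E7Aux

open Classical in
/-- The point `p_t = (0, 4t³/(t+1)²)` is a nonsingular point of `E₇` and, as a rational
point of the elliptic curve, is a torsion point of exact order `7`. -/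
theorem pt_has_order_seven :
    ∃ h : E7.Nonsingular 0 (4 * RatFunc.X ^ 3 / (RatFunc.X + 1) ^ 2),
      addOrderOf (WeierstrassCurve.Affine.Point.some _ _ h) = 7 := by
  open E7Aux WeierstrassCurve.Affine.Point in
  refine ⟨h1, ?_⟩
  haveI : Fact (Nat.Prime 7) := ⟨by norm_num⟩
  have s2 : WeierstrassCurve.Affine.Point.some _ _ h1 + WeierstrassCurve.Affine.Point.some _ _ h1 = WeierstrassCurve.Affine.Point.some _ _ h2 :=
    dbl_eq h2 (ne_negY hy1) (by rw [hL1]; exact hex1) (by rw [hL1]; exact hey1)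
  have s3 : WeierstrassCurve.Affine.Point.some _ _ h2 + WeierstrassCurve.Affine.Point.some _ _ h1 = WeierstrassCurve.Affine.Point.some _ _ h3 :=
    add_eq h3 hy2 (by rw [hL2]; exact hex2) (by rw [hL2]; exact hey2)
  have s4 : WeierstrassCurve.Affine.Point.some _ _ h3 + WeierstrassCurve.Affine.Point.some _ _ h1 = WeierstrassCurve.Affine.Point.some _ _ h4 :=
    add_eq h4 hx3 (by rw [hL3]; exact hex3) (by rw [hL3]; exact hey3)
  have hneg : WeierstrassCurve.Affine.Point.some _ _ h4 = -WeierstrassCurve.Affine.Point.some _ _ h3 := by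
    rw [neg_some]
    refine some_congr rfl ?_
    rw [WeierstrassCurve.Affine.negY, ea1, ea3]
    ring
  have e2 : (2 : ℕ) • WeierstrassCurve.Affine.Point.some _ _ h1 = WeierstrassCurve.Affine.Point.some _ _ h2 := by rw [two_nsmul, s2]
  have e3 : (3 : ℕ) • WeierstrassCurve.Affine.Point.some _ _ h1 = WeierstrassCurve.Affine.Point.some _ _ h3 := by
    show ((2 : ℕ) + 1) • WeierstrassCurve.Affine.Point.some _ _ h1 = WeierstrassCurve.Affine.Point.some _ _ h3
    rw [add_nsmul, e2, one_nsmul, s3]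
  have e4 : (4 : ℕ) • WeierstrassCurve.Affine.Point.some _ _ h1 = WeierstrassCurve.Affine.Point.some _ _ h4 := by
    show ((3 : ℕ) + 1) • WeierstrassCurve.Affine.Point.some _ _ h1 = WeierstrassCurve.Affine.Point.some _ _ h4
    rw [add_nsmul, e3, one_nsmul, s4]
  refine addOrderOf_eq_prime ?_ (some_ne_zero h1)
  show ((3 : ℕ) + 4) • WeierstrassCurve.Affine.Point.some _ _ h1 = 0
  rw [add_nsmul, e3, e4, hneg, add_neg_cancel]
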